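/- arXiv:1406.1399 — 2 statements merged into one kernel-verified Lean document; each statement's English description precedes it below -/
import Mathlib

section
/- Let n = m·d. If a sequence x = [x₀,...,x_{n-1}] with indices in ℤ/nℤ has zero periodic autocorrelation, then its m-compression y = [y₀,...,y_{d-1}], where yᵢ = x_i + x_{i+d} + ... + x_{i+(m-1)d}, also has zero periodic autocorrelation (PAF_y(s) = 0 for all s ≢ 0 mod d). -/
theorem no_cw_stmt3 (n m d : ℕ) [NeZero n] [NeZero d] (hn : n = m * d)
    (x : ZMod n → ℤ)
    (hx : ∀ s : ZMod n, s ≠ 0 → ∑ i, x i * x (i + s) = 0)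
    (y : ZMod d → ℤ)
    (hy : ∀ j : ZMod d, y j = ∑ k ∈ Finset.range m, x ((j.val : ZMod n) + (k : ZMod n) * (d : ZMod n))) :
    ∀ s : ZMod d, s ≠ 0 → ∑ j, y j * y (j + s) = 0 := by
  intro s hs
  have hd : 0 < d := Nat.pos_of_ne_zero (NeZero.ne d)
  have hm : 0 < m := by
    rcases Nat.eq_zero_or_pos m with h | h
    · exact absurd (by rw [hn, h, zero_mul]) (NeZero.ne n)
    · exact h
  have hdvd : d ∣ n := ⟨m, by rw [hn, mul_comm]⟩
  set π : ZMod n →+* ZMod d := ZMod.castHom hdvd (ZMod d) with hπ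
  have hπval : ∀ i : ZMod n, π i = (i.val : ZMod d) := by
    intro i
    rw [hπ, ZMod.castHom_apply, ← ZMod.natCast_val]
  -- y j equals the sum of x over the fiber of π above j
  have key : ∀ j : ZMod d,
      y j = ∑ i ∈ Finset.univ.filter (fun i => π i = j), x i := by
    intro j
    rw [hy]
    refine Finset.sum_bij (fun k _ => ((j.val + k * d : ℕ) : ZMod n)) ?_ ?_ ?_ ?_
    · intro k hk
      simp only [Finset.mem_filter, Finset.mem_univ, true_and]
      rw [hπval, ZMod.val_natCast]
      have hcast : (((j.val + k * d) % n : ℕ) : ZMod d) = ((j.val + k * d : ℕ) : ZMod d) := by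
        rw [ZMod.natCast_eq_natCast_iff']
        rw [Nat.mod_mod_of_dvd _ hdvd]
      rw [hcast]
      push_cast
      simp [ZMod.natCast_self, ZMod.natCast_val, ZMod.cast_id]
    · intro k hk k' hk' h
      have hk1 : k < m := Finset.mem_range.mp hk
      have hk1' : k' < m := Finset.mem_range.mp hk'
      have hj : j.val < d := ZMod.val_lt j
      have hlt : j.val + k * d < n := by
        rw [hn]
        calc j.val + k * d < (k + 1) * d := by rw [add_mul, one_mul]; omega
          _ ≤ m * d := Nat.mul_le_mul_right d hk1
      have hlt' : j.val + k' * d < n := by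
        rw [hn]
        calc j.val + k' * d < (k' + 1) * d := by rw [add_mul, one_mul]; omega
          _ ≤ m * d := Nat.mul_le_mul_right d hk1'
      have hv : j.val + k * d = j.val + k' * d := by
        have := congrArg ZMod.val h
        rwa [ZMod.val_cast_of_lt hlt, ZMod.val_cast_of_lt hlt'] at this
      have : k * d = k' * d := by omega
      exact Nat.eq_of_mul_eq_mul_right hd this
    · intro i hi
      simp only [Finset.mem_filter, Finset.mem_univ, true_and] at hi
      rw [hπval] at hi
      have hmod : i.val % d = j.val := by
        have := congrArg ZMod.val hi
        rwa [ZMod.val_natCast] at this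
      refine ⟨i.val / d, Finset.mem_range.mpr ?_, ?_⟩
      · have h1 : i.val < m * d := by rw [← hn]; exact ZMod.val_lt i
        exact (Nat.div_lt_iff_lt_mul hd).mpr h1
      · show ((j.val + i.val / d * d : ℕ) : ZMod n) = i
        rw [← hmod, Nat.mod_add_div']
        simp [ZMod.natCast_val, ZMod.cast_id]
    · intro k hk
      congr 1
      push_cast
      ring
  have hSmap : ∀ i : ZMod n,
      ∑ i' ∈ Finset.univ.filter (fun i' => π i' = π i + s), x i'
        = ∑ t ∈ Finset.univ.filter (fun t => π t = s), x (i + t) := by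
    intro i
    refine (Finset.sum_bij (fun t _ => i + t) ?_ ?_ ?_ ?_).symm
    · intro t ht
      simp only [Finset.mem_filter, Finset.mem_univ, true_and] at ht ⊢
      rw [map_add, ht]
    · intro t _ t' _ h
      exact add_left_cancel h
    · intro i' hi'
      simp only [Finset.mem_filter, Finset.mem_univ, true_and] at hi'
      refine ⟨i' - i, Finset.mem_filter.mpr ⟨Finset.mem_univ _, ?_⟩, by ring⟩
      rw [map_sub, hi']; ring
    · intro t _; rfl
  calc ∑ j, y j * y (j + s)
      = ∑ j : ZMod d, ∑ i ∈ Finset.univ.filter (fun i => π i = j),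
          x i * ∑ i' ∈ Finset.univ.filter (fun i' => π i' = π i + s), x i' := by
        refine Finset.sum_congr rfl fun j _ => ?_
        rw [key j, key (j + s), Finset.sum_mul]
        refine Finset.sum_congr rfl fun i hi => ?_
        simp only [Finset.mem_filter, Finset.mem_univ, true_and] at hi
        rw [hi]
    _ = ∑ i : ZMod n, x i * ∑ i' ∈ Finset.univ.filter (fun i' => π i' = π i + s), x i' := by
        exact Finset.sum_fiberwise _ _ _
    _ = ∑ i : ZMod n, ∑ t ∈ Finset.univ.filter (fun t => π t = s), x i * x (i + t) := by
        refine Finset.sum_congr rfl fun i _ => ?_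
        rw [hSmap i, Finset.mul_sum]
    _ = ∑ t ∈ Finset.univ.filter (fun t => π t = s), ∑ i : ZMod n, x i * x (i + t) := by
        exact Finset.sum_comm
    _ = 0 := by
        refine Finset.sum_eq_zero fun t ht => ?_
        simp only [Finset.mem_filter, Finset.mem_univ, true_and] at ht
        refine hx t fun h => hs ?_
        rw [h, map_zero] at ht
        exact ht.symm
end

section
/- Let n = m·d, let σ ∈ Φ_d be given by σ(j) = uj + v with u ∈ (ℤ/dℤ)*, v ∈ ℤ/dℤ, and let σ̃ ∈ Φ_n be given by σ̃(i) = ũ·i + ṽ where ũ ∈ (ℤ/nℤ)* reduces to u mod d and ṽ ∈ ℤ/nℤ reduces to v mod d. Then compression commutes with these actions: c_{n,d} ∘ σ̃^{-1} = σ^{-1} ∘ c_{n,d} as maps on integer sequences of length n. -/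
/-!
Both sides are sums over a fibre of the reduction `ZMod n → ZMod d`: the fibre over `r` is
`{r.val + k * d | k < m}`, and the affine bijection `y ↦ ũ * y + ṽ` of `ZMod n` carries the fibre
over `j` onto the fibre over `u * j + v`.
-/

open Finset

theorem ZMod.val_mod_eq_val_of_castHom_eq {n d : ℕ} [NeZero n] (hd : d ∣ n) {y : ZMod n}
    {r : ZMod d} (h : ZMod.castHom hd (ZMod d) y = r) : y.val % d = r.val := by
  rw [← h, ZMod.castHom_apply, ZMod.cast_eq_val, ZMod.val_natCast]

theorem ZMod.sum_range_eq_sum_fiber_castHom {M : Type*} [AddCommMonoid M] {n m d : ℕ}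
    [NeZero n] [NeZero d] (hn : n = m * d) (hd : d ∣ n) (f : ZMod n → M) (r : ZMod d) :
    ∑ k ∈ range m, f ((r.val : ZMod n) + (k : ZMod n) * (d : ZMod n)) =
      ∑ y with ZMod.castHom hd (ZMod d) y = r, f y := by
  have hd0 : 0 < d := Nat.pos_of_ne_zero (NeZero.ne d)
  have hval : ∀ k < m, ((r.val : ZMod n) + (k : ZMod n) * (d : ZMod n)).val = r.val + k * d := by
    intro k hk
    rw [← Nat.cast_mul, ← Nat.cast_add, ZMod.val_cast_of_lt]
    calc r.val + k * d < d + k * d := by have := ZMod.val_lt r; omega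
      _ = (k + 1) * d := by ring
      _ ≤ n := hn ▸ Nat.mul_le_mul_right d hk
  refine sum_bij' (fun k _ => (r.val : ZMod n) + (k : ZMod n) * (d : ZMod n))
    (fun y _ => y.val / d) ?_ ?_ ?_ ?_ (fun _ _ => rfl)
  · intro k _
    rw [mem_filter, map_add, map_mul, map_natCast, map_natCast, map_natCast, ZMod.natCast_self,
      mul_zero, add_zero, ZMod.natCast_zmod_val]
    exact ⟨mem_univ _, rfl⟩
  · intro y _
    rw [mem_range, Nat.div_lt_iff_lt_mul hd0, ← hn]
    exact ZMod.val_lt y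
  · intro k hk
    rw [mem_range] at hk
    rw [hval k hk, Nat.add_mul_div_right _ _ hd0, Nat.div_eq_of_lt (ZMod.val_lt r), zero_add]
  · intro y hy
    rw [mem_filter] at hy
    rw [← ZMod.val_mod_eq_val_of_castHom_eq hd hy.2, ← Nat.cast_mul, ← Nat.cast_add,
      Nat.mod_add_div', ZMod.natCast_zmod_val]

theorem no_cw_stmt5 (n m d : ℕ) [NeZero n] [NeZero d] (hn : n = m * d)
    (hd : d ∣ n)
    (u : (ZMod d)ˣ) (v : ZMod d) (utld : (ZMod n)ˣ) (vtld : ZMod n)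
    (hu : ZMod.castHom hd (ZMod d) (utld : ZMod n) = (u : ZMod d))
    (hv : ZMod.castHom hd (ZMod d) vtld = v)
    (x : ZMod n → ℤ) :
    ∀ j : ZMod d,
      ∑ k ∈ Finset.range m,
        x ((utld : ZMod n) * (((j.val : ZMod n) + (k : ZMod n) * (d : ZMod n))) + vtld) =
      ∑ k ∈ Finset.range m,
        x ((((u : ZMod d) * j + v).val : ZMod n) + (k : ZMod n) * (d : ZMod n)) := by
  intro j
  rw [ZMod.sum_range_eq_sum_fiber_castHom hn hd (fun y => x (utld * y + vtld)),
    ZMod.sum_range_eq_sum_fiber_castHom hn hd x]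
  refine sum_equiv ((Units.mulLeft utld).trans (Equiv.addRight vtld)) (fun y => ?_) (fun _ _ => rfl)
  simp only [mem_filter, mem_univ, true_and, Equiv.trans_apply, Units.mulLeft_apply,
    Equiv.coe_addRight, map_add, map_mul, hu, hv, add_left_inj, Units.mul_right_inj]
end
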